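/- Every graph of pathwidth at most p is p²-almost equitably (p+1)-colorable. -/

import Mathlib

/-- A graph `G` on a finite vertex type has an equitable `k`-coloring if it has a
proper coloring with `k` colors in which the sizes of any two color classes differ
by at most one. -/
def EquitablyColorable {W : Type*} [Fintype W] (G : SimpleGraph W) (k : ℕ) : Prop :=
  ∃ c : W → Fin k, (∀ u v : W, G.Adj u v → c u ≠ c v) ∧
    ∀ i j : Fin k, (Finset.univ.filter (fun v => c v = i)).card ≤
      (Finset.univ.filter (fun v => c v = j)).card + 1

/-- A graph `G` is `p`-almost equitably `k`-colorable if there is a set `X` of at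
most `p` vertices such that the induced subgraph `G \ X` has an equitable
`k`-coloring. -/
def AlmostEquitablyColorable {V : Type*} [Fintype V] [DecidableEq V]
    (G : SimpleGraph V) (p k : ℕ) : Prop :=
  ∃ X : Finset V, X.card ≤ p ∧
    EquitablyColorable (G.induce (↑(Xᶜ) : Set V)) k

/-- `G` has pathwidth at most `p`: it admits a path-decomposition (a sequence of
bags covering all vertices and edges, whose occurrences of each vertex are
contiguous) all of whose bags have at most `p + 1` vertices. -/
def HasPathwidthLE {V : Type*} (G : SimpleGraph V) (p : ℕ) : Prop :=
  ∃ (r : ℕ) (B : Fin r → Finset V),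
    (∀ v, ∃ i, v ∈ B i) ∧
    (∀ u v, G.Adj u v → ∃ i, u ∈ B i ∧ v ∈ B i) ∧
    (∀ v, ∀ i j l : Fin r, i ≤ j → j ≤ l → v ∈ B i → v ∈ B l → v ∈ B j) ∧
    (∀ i, (B i).card ≤ p + 1)

/-!
Give each vertex the interval `[a v, b v]` of indices of the bags containing it. Adjacent vertices
get overlapping intervals and every point lies in at most `p + 1` intervals, so a left-to-right
greedy sweep colours the vertices with `p + 1` colours, each colour class consisting of pairwise
disjoint intervals.

Such a colouring is balanced one class per round. Swap two colours `i` and `j` on the intervals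
starting at or after a point `m`, and delete the earlier intervals that now overlap a later interval
of the same colour: there is at most one, and the classes stay disjoint. As `m` grows, the new
`j`-class gains at most one vertex per step, moving from the size of the old `i`-class to that of
the old `j`-class, so it attains every size in between. With targets summing to `n - p`, each of
the `p` rounds fixes one class at the cost of exactly one deletion, so `p ≤ p²` vertices are
deleted.
-/

open Finset

lemma Nat.exists_eq_of_map_succ_le {f : ℕ → ℕ} (hf : ∀ m, f (m + 1) ≤ f m + 1) {T M : ℕ}
    (h0 : f 0 ≤ T) (hM : T ≤ f M) : ∃ m, f m = T := by
  have hex : ∃ m, T ≤ f m := ⟨M, hM⟩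
  refine ⟨Nat.find hex, le_antisymm ?_ (Nat.find_spec hex)⟩
  rcases h : Nat.find hex with _ | m
  · exact h0
  · have := Nat.find_min hex (h ▸ Nat.lt_succ_self m : m < Nat.find hex)
    have := hf m
    omega

lemma Fin.exists_balanced_sum_eq {k : ℕ} (hk : 0 < k) (N : ℕ) :
    ∃ τ : Fin k → ℕ, (∀ i j, τ i ≤ τ j + 1) ∧ ∑ i, τ i = N := by
  induction N with
  | zero => exact ⟨0, by simp⟩
  | succ N ih =>
    obtain ⟨τ, hτ, hsum⟩ := ih
    obtain ⟨i₀, -, hi₀⟩ := exists_min_image univ τ (univ_nonempty_iff.2 ⟨⟨0, hk⟩⟩)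
    refine ⟨τ + Pi.single i₀ 1, fun i j => ?_, by simp [sum_add_distrib, hsum]⟩
    have := hi₀ i (mem_univ _)
    have := hi₀ j (mem_univ _)
    have := hτ i j
    simp only [Pi.add_apply, Pi.single_apply]
    split_ifs <;> subst_vars <;> omega

section IntervalColoring

variable {V : Type*} [Fintype V] [DecidableEq V] {k : ℕ}

def colorClass (X : Finset V) (c : V → Fin k) (i : Fin k) : Finset V :=
  {v | v ∉ X ∧ c v = i}

@[simp]
lemma mem_colorClass {X : Finset V} {c : V → Fin k} {i : Fin k} {v : V} :
    v ∈ colorClass X c i ↔ v ∉ X ∧ c v = i := by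
  simp [colorClass]

lemma sum_card_colorClass (X : Finset V) (c : V → Fin k) :
    ∑ i, #(colorClass X c i) = #Xᶜ := by
  rw [card_eq_sum_card_fiberwise (f := c) (t := univ) fun _ _ => mem_univ _]
  congr! 2 with i
  ext v
  simp

lemma sum_card_colorClass_add_card_eq {X X' : Finset V} {c c' : V → Fin k}
    (U : Finset (Fin k)) (hU : ∀ l ∉ U, #(colorClass X' c' l) = #(colorClass X c l)) :
    ∑ l ∈ U, #(colorClass X' c' l) + #X' = ∑ l ∈ U, #(colorClass X c l) + #X := by
  have key : ∀ (X : Finset V) (c : V → Fin k), ∑ l ∈ U, #(colorClass X c l) + #X +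
      ∑ l ∈ Uᶜ, #(colorClass X c l) = Fintype.card V := fun X c => by
    rw [add_right_comm, sum_add_sum_compl, sum_card_colorClass, card_compl_add_card]
  have hUc : ∑ l ∈ Uᶜ, #(colorClass X' c' l) = ∑ l ∈ Uᶜ, #(colorClass X c l) :=
    sum_congr rfl fun l hl => hU l (mem_compl.1 hl)
  have := key X c
  have := key X' c'
  omega

def IsIntervalColoring (a b : V → ℕ) (X : Finset V) (c : V → Fin k) : Prop :=
  {v | v ∉ X}.Pairwise fun u v => c u = c v → b u < a v ∨ b v < a u

variable {a b : V → ℕ} {X : Finset V} {c : V → Fin k}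

omit [Fintype V] [DecidableEq V] in
lemma IsIntervalColoring.mono {Y : Finset V} (h : IsIntervalColoring a b X c) (hXY : X ⊆ Y) :
    IsIntervalColoring a b Y c :=
  Set.Pairwise.mono (fun _ hv hvX => hv (hXY hvX)) h

lemma IsIntervalColoring.card_le_one (h : IsIntervalColoring a b X c) (i : Fin k) (m : ℕ) :
    #{v | v ∉ X ∧ c v = i ∧ a v ≤ m ∧ m ≤ b v} ≤ 1 := by
  refine Finset.card_le_one.2 fun u hu v hv => by_contra fun huv => ?_
  simp only [mem_filter, mem_univ, true_and] at hu hv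
  rcases h hu.1 hv.1 huv (hu.2.1.trans hv.2.1.symm) with h | h <;> omega

lemma exists_isIntervalColoring (hab : ∀ v, a v ≤ b v) (hk : 0 < k)
    (hply : ∀ m, #{v | a v ≤ m ∧ m ≤ b v} ≤ k) :
    ∃ c : V → Fin k, IsIntervalColoring a b ∅ c := by
  suffices ∀ s : Finset V, ∃ c : V → Fin k,
      (s : Set V).Pairwise fun u v => c u = c v → b u < a v ∨ b v < a u by
    obtain ⟨c, hc⟩ := this univ
    exact ⟨c, hc.mono fun v _ => mem_coe.2 (mem_univ v)⟩
  intro s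
  induction s using induction_on_max_value a with
  | empty => exact ⟨fun _ => ⟨0, hk⟩, by simp⟩
  | insert w s hws hmax ih =>
    obtain ⟨c, hc⟩ := ih
    set blockers := s.filter fun v => a w ≤ b v
    have hblockers : #blockers < k := by
      have hsub : insert w blockers ⊆ ({v | a v ≤ a w ∧ a w ≤ b v} : Finset V) := by
        intro v hv
        rcases mem_insert.1 hv with rfl | hv
        · simpa using hab v
        · simp only [blockers, mem_filter] at hv
          simpa using ⟨hmax v hv.1, hv.2⟩
      have := (card_le_card hsub).trans (hply (a w))
      rwa [card_insert_of_notMem fun h => hws (mem_filter.1 h).1, Nat.add_one_le_iff] at this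
    obtain ⟨i, -, hi⟩ := exists_mem_notMem_of_card_lt_card (s := blockers.image c) (t := univ)
      (by simpa using card_image_le.trans_lt hblockers)
    have hfree : ∀ v ∈ s, c v = i → b v < a w := fun v hv hcv =>
      not_le.1 fun hwv => hi (mem_image.2 ⟨v, mem_filter.2 ⟨hv, hwv⟩, hcv⟩)
    refine ⟨Function.update c w i, ?_⟩
    rw [coe_insert, Set.pairwise_insert]
    refine ⟨fun u hu v hv huv => ?_, fun v hv hwv => ?_⟩
    · have hu' : u ≠ w := fun h => hws (h ▸ hu)
      have hv' : v ≠ w := fun h => hws (h ▸ hv)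
      simpa only [Function.update_of_ne hu', Function.update_of_ne hv'] using hc hu hv huv
    · have hv' : v ≠ w := fun h => hwv h.symm
      simp only [Function.update_self, Function.update_of_ne hv']
      exact ⟨fun h => Or.inr (hfree v hv h.symm), fun h => Or.inl (hfree v hv h)⟩

lemma IsIntervalColoring.exists_delete (h : IsIntervalColoring a b X c) {i : Fin k}
    (hi : 0 < #(colorClass X c i)) :
    ∃ X', IsIntervalColoring a b X' c ∧ #X' = #X + 1 ∧
      #(colorClass X' c i) + 1 = #(colorClass X c i) ∧
      ∀ l, l ≠ i → colorClass X' c l = colorClass X c l := by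
  obtain ⟨v, hv⟩ := card_pos.1 hi
  obtain ⟨hvX, hcv⟩ := mem_colorClass.1 hv
  refine ⟨insert v X, h.mono (subset_insert v X), card_insert_of_notMem hvX, ?_, fun l hl => ?_⟩
  · rw [← card_erase_add_one hv]
    congr 2
    ext w
    simp only [mem_colorClass, mem_insert, mem_erase, not_or]
    grind
  · ext w
    simp only [mem_colorClass, mem_insert, not_or]
    grind

def recolorFrom (a : V → ℕ) (c : V → Fin k) (σ : Equiv.Perm (Fin k)) (m : ℕ) (v : V) : Fin k :=
  if m ≤ a v then σ (c v) else c v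

/-- The vertices `v` starting before `m` that overlap a vertex `x` starting at or after `m` to
which `recolorFrom a c σ m` gives the colour of `v`. -/
def conflictsAt (a b : V → ℕ) (X : Finset V) (c : V → Fin k) (σ : Equiv.Perm (Fin k)) (m : ℕ) :
    Finset V :=
  {v | v ∉ X ∧ a v < m ∧ ∃ x, x ∉ X ∧ m ≤ a x ∧ a x ≤ b v ∧ σ (c x) = c v}

variable {σ : Equiv.Perm (Fin k)} {m : ℕ}

lemma mem_conflictsAt {v : V} : v ∈ conflictsAt a b X c σ m ↔
    v ∉ X ∧ a v < m ∧ ∃ x, x ∉ X ∧ m ≤ a x ∧ a x ≤ b v ∧ σ (c x) = c v := by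
  simp [conflictsAt]

lemma IsIntervalColoring.recolorFrom_union_conflictsAt (h : IsIntervalColoring a b X c) :
    IsIntervalColoring a b (X ∪ conflictsAt a b X c σ m) (recolorFrom a c σ m) := by
  intro u hu v hv huv hc
  simp only [Set.mem_ofPred_eq, mem_union, not_or] at hu hv
  unfold recolorFrom at hc
  split_ifs at hc with hmu hmv hmv
  · exact h hu.1 hv.1 huv (σ.injective hc)
  · refine Or.inr (not_le.1 fun hvu => hv.2 (mem_conflictsAt.2 ?_))
    exact ⟨hv.1, by omega, u, hu.1, hmu, hvu, hc⟩
  · refine Or.inl (not_le.1 fun huv => hu.2 (mem_conflictsAt.2 ?_))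
    exact ⟨hu.1, by omega, v, hv.1, hmv, huv, hc.symm⟩
  · exact h hu.1 hv.1 huv hc

lemma lt_of_mem_conflictsAt (h : IsIntervalColoring a b X c) (hab : ∀ v, a v ≤ b v) {u w : V}
    (hu : u ∈ conflictsAt a b X c σ m) (hwX : w ∉ X) (hwm : a w < m) (hcw : σ (c w) = c u) :
    b w < b u := by
  obtain ⟨-, -, x, hxX, hmx, hxu, hcx⟩ := mem_conflictsAt.1 hu
  have hwx : w ≠ x := by rintro rfl; omega
  rcases h hwX hxX hwx (σ.injective (hcw.trans hcx.symm)) with h | h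
  · omega
  · have := hab x; omega

variable {i j : Fin k}

lemma color_mem_of_mem_conflictsAt (h : IsIntervalColoring a b X c) (hab : ∀ v, a v ≤ b v)
    {v : V} (hv : v ∈ conflictsAt a b X c (Equiv.swap i j) m) : c v = i ∨ c v = j := by
  by_contra! hne
  obtain ⟨hvX, hvm, x, hxX, hmx, hxv, hcx⟩ := mem_conflictsAt.1 hv
  have hxv' : x ≠ v := by rintro rfl; omega
  rw [Equiv.swap_apply_eq_iff, Equiv.swap_apply_of_ne_of_ne hne.1 hne.2] at hcx
  rcases h hxX hvX hxv' hcx with h | h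
  · have := hab x; omega
  · omega

lemma card_conflictsAt_le_one (h : IsIntervalColoring a b X c) (hab : ∀ v, a v ≤ b v) :
    #(conflictsAt a b X c (Equiv.swap i j) m) ≤ 1 := by
  refine Finset.card_le_one.2 fun u hu w hw => by_contra fun huw => ?_
  obtain ⟨huX, hum, x, -, hmx, hxu, -⟩ := mem_conflictsAt.1 hu
  obtain ⟨hwX, hwm, y, -, hmy, hyw, -⟩ := mem_conflictsAt.1 hw
  have hcuw : c u ≠ c w := fun he => by rcases h huX hwX huw he with h | h <;> omega
  have key : Equiv.swap i j (c w) = c u ∧ Equiv.swap i j (c u) = c w := by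
    rcases color_mem_of_mem_conflictsAt h hab hu with hu' | hu' <;>
      rcases color_mem_of_mem_conflictsAt h hab hw with hw' | hw' <;>
      simp_all
  have := lt_of_mem_conflictsAt h hab hu hwX hwm key.1
  have := lt_of_mem_conflictsAt h hab hw huX hum key.2
  omega

lemma colorClass_recolorFrom_of_ne (h : IsIntervalColoring a b X c) (hab : ∀ v, a v ≤ b v)
    (m : ℕ) {l : Fin k} (hi : l ≠ i) (hj : l ≠ j) :
    colorClass (X ∪ conflictsAt a b X c (Equiv.swap i j) m)
      (recolorFrom a c (Equiv.swap i j) m) l = colorClass X c l := by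
  have hcol : ∀ v, recolorFrom a c (Equiv.swap i j) m v = l ↔ c v = l := fun v => by
    unfold recolorFrom
    split_ifs
    · rw [Equiv.swap_apply_eq_iff, Equiv.swap_apply_of_ne_of_ne hi hj]
    · rfl
  ext v
  simp only [mem_colorClass, mem_union, not_or, hcol]
  refine ⟨fun hv => ⟨hv.1.1, hv.2⟩, fun hv => ⟨⟨hv.1, fun hvD => ?_⟩, hv.2⟩⟩
  rcases color_mem_of_mem_conflictsAt h hab hvD with he | he <;> simp_all

lemma colorClass_recolorFrom_zero :
    colorClass (X ∪ conflictsAt a b X c (Equiv.swap i j) 0)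
      (recolorFrom a c (Equiv.swap i j) 0) j = colorClass X c i := by
  ext v
  simp [recolorFrom, mem_conflictsAt, Equiv.swap_apply_eq_iff]

lemma colorClass_recolorFrom_of_forall_lt {M : ℕ} (hM : ∀ v, a v < M) :
    colorClass (X ∪ conflictsAt a b X c (Equiv.swap i j) M)
      (recolorFrom a c (Equiv.swap i j) M) j = colorClass X c j := by
  ext v
  have := hM v
  simp only [mem_colorClass, mem_union, mem_conflictsAt, recolorFrom, not_or]
  grind

lemma card_colorClass_recolorFrom_succ_le (h : IsIntervalColoring a b X c)
    (hab : ∀ v, a v ≤ b v) (m : ℕ) :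
    #(colorClass (X ∪ conflictsAt a b X c (Equiv.swap i j) (m + 1))
      (recolorFrom a c (Equiv.swap i j) (m + 1)) j) ≤
    #(colorClass (X ∪ conflictsAt a b X c (Equiv.swap i j) m)
      (recolorFrom a c (Equiv.swap i j) m) j) + 1 := by
  set S := fun m => colorClass (X ∪ conflictsAt a b X c (Equiv.swap i j) m)
    (recolorFrom a c (Equiv.swap i j) m) j
  have hsub : S (m + 1) \ S m ⊆ ({v | v ∉ X ∧ c v = j ∧ a v ≤ m ∧ m ≤ b v} : Finset V) := by
    intro v hv
    simp only [S, mem_sdiff, mem_colorClass, mem_union, not_or, recolorFrom,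
      mem_conflictsAt] at hv
    have := hab v
    simp only [mem_filter, mem_univ, true_and]
    grind
  calc #(S (m + 1)) ≤ #(S (m + 1) \ S m) + #(S m) := card_le_card_sdiff_add_card
    _ ≤ 1 + #(S m) := by gcongr; exact (card_le_card hsub).trans (h.card_le_one j m)
    _ = #(S m) + 1 := add_comm _ _

lemma IsIntervalColoring.exists_exchange (h : IsIntervalColoring a b X c)
    (hab : ∀ v, a v ≤ b v) {T : ℕ} (hiT : #(colorClass X c i) ≤ T)
    (hTj : T ≤ #(colorClass X c j)) :
    ∃ X' c', IsIntervalColoring a b X' c' ∧ X ⊆ X' ∧ #X' ≤ #X + 1 ∧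
      #(colorClass X' c' j) = T ∧
      ∀ l, l ≠ i → l ≠ j → colorClass X' c' l = colorClass X c l := by
  have hM : ∀ v, a v < univ.sup a + 1 := fun v => Nat.lt_succ_of_le (le_sup (mem_univ v))
  obtain ⟨m, hm⟩ := Nat.exists_eq_of_map_succ_le (f := fun m => #(colorClass
      (X ∪ conflictsAt a b X c (Equiv.swap i j) m) (recolorFrom a c (Equiv.swap i j) m) j))
    (card_colorClass_recolorFrom_succ_le h hab) (T := T) (M := univ.sup a + 1)
    (by rwa [colorClass_recolorFrom_zero]) (by rwa [colorClass_recolorFrom_of_forall_lt hM])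
  refine ⟨_, _, h.recolorFrom_union_conflictsAt, subset_union_left, ?_, hm,
    fun l hi hj => colorClass_recolorFrom_of_ne h hab m hi hj⟩
  exact (card_union_le _ _).trans (by gcongr; exact card_conflictsAt_le_one h hab)

/-- If a class of `U` is below its target, exchange it with one above its target (deleting one
more vertex of the former if the exchange deleted none); otherwise some class of `U` is on target,
and a vertex is deleted from a class above target. -/
lemma IsIntervalColoring.exists_fix_class (h : IsIntervalColoring a b X c)
    (hab : ∀ v, a v ≤ b v) {τ : Fin k → ℕ} (hτ : ∀ i j, τ i ≤ τ j + 1) {U : Finset (Fin k)}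
    (hU : 2 ≤ #U) (hsum : ∑ l ∈ U, #(colorClass X c l) = ∑ l ∈ U, τ l + (#U - 1)) :
    ∃ j ∈ U, ∃ X' c', IsIntervalColoring a b X' c' ∧ #X' = #X + 1 ∧
      #(colorClass X' c' j) = τ j ∧ ∀ l ∉ U, #(colorClass X' c' l) = #(colorClass X c l) := by
  obtain ⟨j, hjU, hj⟩ : ∃ j ∈ U, τ j < #(colorClass X c j) := exists_lt_of_sum_lt (by omega)
  by_cases hdef : ∃ i ∈ U, #(colorClass X c i) < τ i
  · obtain ⟨i, hiU, hi⟩ := hdef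
    have hij : i ≠ j := by rintro rfl; omega
    obtain ⟨X₁, c₁, h₁, hXX₁, hX₁, hj₁, hother₁⟩ :=
      h.exists_exchange hab (i := i) (T := τ j) (by have := hτ i j; omega) hj.le
    have hother₁' : ∀ l ∉ U, #(colorClass X₁ c₁ l) = #(colorClass X c l) := fun l hl => by
      rw [hother₁ l (by rintro rfl; exact hl hiU) (by rintro rfl; exact hl hjU)]
    obtain hX₁ | hX₁ : #X₁ = #X + 1 ∨ #X₁ = #X := by have := card_le_card hXX₁; omega
    · exact ⟨j, hjU, X₁, c₁, h₁, hX₁, hj₁, hother₁'⟩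
    · have hpair := sum_card_colorClass_add_card_eq (X := X) (c := c) (X' := X₁) (c' := c₁)
        {i, j} fun l hl => by
          simp only [mem_insert, mem_singleton, not_or] at hl
          rw [hother₁ l hl.1 hl.2]
      rw [sum_pair hij, sum_pair hij] at hpair
      obtain ⟨X₂, h₂, hX₂, -, hother₂⟩ := h₁.exists_delete (i := i) (by omega)
      refine ⟨j, hjU, X₂, c₁, h₂, by omega, by rw [hother₂ j hij.symm, hj₁], fun l hl => ?_⟩
      rw [hother₂ l (by rintro rfl; exact hl hiU), hother₁' l hl]
  · push Not at hdef
    obtain ⟨j₀, hj₀U, hj₀⟩ : ∃ j₀ ∈ U, #(colorClass X c j₀) < τ j₀ + 1 := by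
      refine exists_lt_of_sum_lt ?_
      rw [sum_add_distrib, sum_const, smul_eq_mul, mul_one]
      omega
    have hjj₀ : j ≠ j₀ := by rintro rfl; omega
    obtain ⟨X', h', hX', -, hother⟩ := h.exists_delete (i := j) (by omega)
    refine ⟨j₀, hj₀U, X', c, h', hX', ?_, fun l hl => ?_⟩
    · rw [hother j₀ hjj₀.symm]
      have := hdef j₀ hj₀U
      omega
    · rw [hother l (by rintro rfl; exact hl hjU)]

lemma IsIntervalColoring.exists_card_colorClass_eq (h : IsIntervalColoring a b X c)
    (hab : ∀ v, a v ≤ b v) {τ : Fin k → ℕ} (hτ : ∀ i j, τ i ≤ τ j + 1) {n : ℕ}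
    {U : Finset (Fin k)} (hU : #U = n + 1) (hfix : ∀ l ∉ U, #(colorClass X c l) = τ l)
    (hsum : ∑ l ∈ U, #(colorClass X c l) = ∑ l ∈ U, τ l + n) :
    ∃ X' c', IsIntervalColoring a b X' c' ∧ #X' = #X + n ∧ ∀ l, #(colorClass X' c' l) = τ l := by
  induction n generalizing U X c with
  | zero =>
    obtain ⟨j, rfl⟩ := card_eq_one.1 hU
    refine ⟨X, c, h, rfl, fun l => ?_⟩
    by_cases hl : l = j
    · simpa [hl] using hsum
    · exact hfix l (by simpa using hl)
  | succ n ih =>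
    obtain ⟨j, hjU, X₁, c₁, h₁, hX₁, hj₁, hother₁⟩ :=
      h.exists_fix_class hab hτ (U := U) (by omega) (by rw [hsum, hU]; rfl)
    have hmass := sum_card_colorClass_add_card_eq U hother₁
    have hfix₁ : ∀ l ∉ U.erase j, #(colorClass X₁ c₁ l) = τ l := fun l hl => by
      by_cases hlj : l = j
      · rw [hlj, hj₁]
      · have hlU : l ∉ U := fun hlU => hl (mem_erase.2 ⟨hlj, hlU⟩)
        rw [hother₁ l hlU, hfix l hlU]
    have hsum₁ : ∑ l ∈ U.erase j, #(colorClass X₁ c₁ l) = ∑ l ∈ U.erase j, τ l + n := by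
      have := sum_erase_add U (fun l => #(colorClass X₁ c₁ l)) hjU
      have := sum_erase_add U τ hjU
      omega
    obtain ⟨X', c', h', hX', hτ'⟩ :=
      ih h₁ (by rw [card_erase_of_mem hjU, hU]; rfl) hfix₁ hsum₁
    exact ⟨X', c', h', by omega, hτ'⟩

theorem exists_isIntervalColoring_balanced (hab : ∀ v, a v ≤ b v) {p : ℕ}
    (hply : ∀ m, #{v | a v ≤ m ∧ m ≤ b v} ≤ p + 1) :
    ∃ (X : Finset V) (c : V → Fin (p + 1)), IsIntervalColoring a b X c ∧ #X ≤ p ∧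
      ∀ i j, #(colorClass X c i) ≤ #(colorClass X c j) + 1 := by
  by_cases hV : Fintype.card V < p
  · refine ⟨univ, fun _ => 0, fun v hv => absurd (mem_univ v) hv, hV.le, fun i j => ?_⟩
    simp [colorClass]
  obtain ⟨c, hc⟩ := exists_isIntervalColoring hab (Nat.succ_pos p) hply
  obtain ⟨τ, hτ, hτsum⟩ := Fin.exists_balanced_sum_eq (Nat.succ_pos p) (Fintype.card V - p)
  have hsum : ∑ l, #(colorClass ∅ c l) = ∑ l, τ l + p := by
    rw [sum_card_colorClass, hτsum, compl_empty, card_univ]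
    omega
  obtain ⟨X, c', h', hX, hτ'⟩ :=
    hc.exists_card_colorClass_eq hab hτ (by simp) (fun l hl => absurd (mem_univ l) hl) hsum
  exact ⟨X, c', h', by simpa using hX.le, fun i j => by simpa only [hτ'] using hτ i j⟩

end IntervalColoring

lemma HasPathwidthLE.exists_intervals {V : Type*} [Fintype V] [DecidableEq V]
    {G : SimpleGraph V} {p : ℕ} (hpw : HasPathwidthLE G p) :
    ∃ a b : V → ℕ, (∀ v, a v ≤ b v) ∧ (∀ u v, G.Adj u v → a u ≤ b v ∧ a v ≤ b u) ∧
      ∀ m, #{v | a v ≤ m ∧ m ≤ b v} ≤ p + 1 := by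
  obtain ⟨r, B, hcover, hedge, hcontig, hcard⟩ := hpw
  have hne : ∀ v, ({i | v ∈ B i} : Finset (Fin r)).Nonempty := fun v => by
    obtain ⟨i, hi⟩ := hcover v
    exact ⟨i, by simpa using hi⟩
  set first := fun v => ({i | v ∈ B i} : Finset (Fin r)).min' (hne v)
  set last := fun v => ({i | v ∈ B i} : Finset (Fin r)).max' (hne v)
  have hfirst : ∀ v, v ∈ B (first v) := fun v => by simpa using min'_mem _ (hne v)
  have hlast : ∀ v, v ∈ B (last v) := fun v => by simpa using max'_mem _ (hne v)
  have hbetween : ∀ v i, v ∈ B i → first v ≤ i ∧ i ≤ last v := fun v i hi =>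
    ⟨min'_le _ _ (by simpa using hi), le_max' _ _ (by simpa using hi)⟩
  refine ⟨fun v => first v, fun v => last v, fun v => (hbetween v _ (hfirst v)).2,
    fun u v huv => ?_, fun m => ?_⟩
  · obtain ⟨i, hu, hv⟩ := hedge u v huv
    obtain ⟨hu₁, hu₂⟩ := hbetween u i hu
    obtain ⟨hv₁, hv₂⟩ := hbetween v i hv
    exact ⟨hu₁.trans hv₂, hv₁.trans hu₂⟩
  · by_cases hm : m < r
    · refine (card_le_card fun v hv => ?_).trans (hcard ⟨m, hm⟩)
      simp only [mem_filter, mem_univ, true_and] at hv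
      exact hcontig v (first v) ⟨m, hm⟩ (last v) hv.1 hv.2 (hfirst v) (hlast v)
    · rw [card_eq_zero.2 (filter_eq_empty_iff.2 fun v _ h => hm (h.2.trans_lt (last v).isLt))]
      exact Nat.zero_le _

lemma almostEquitablyColorable_of_isIntervalColoring {V : Type*} [Fintype V] [DecidableEq V]
    {G : SimpleGraph V} {a b : V → ℕ} (hadj : ∀ u v, G.Adj u v → a u ≤ b v ∧ a v ≤ b u)
    {k q : ℕ} {X : Finset V} {c : V → Fin k} (h : IsIntervalColoring a b X c) (hX : #X ≤ q)
    (hbal : ∀ i j, #(colorClass X c i) ≤ #(colorClass X c j) + 1) :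
    AlmostEquitablyColorable G q k := by
  have hclass : ∀ i, (univ.filter fun w : ((Xᶜ : Finset V) : Set V) => c w = i).card =
      #(colorClass X c i) := fun i => by
    rw [← card_map (Function.Embedding.subtype _)]
    congr 1
    ext v
    simp [and_comm]
  refine ⟨X, hX, fun w => c w, fun u v huv hc => ?_, fun i j => by
    simpa only [hclass] using hbal i j⟩
  have hu : (u : V) ∉ X := by simpa using u.2
  have hv : (v : V) ∉ X := by simpa using v.2
  have := hadj u v huv
  rcases h hu hv (G.ne_of_adj huv) hc with h | h <;> omega

theorem stmt9 {V : Type} [Fintype V] [DecidableEq V] (G : SimpleGraph V) (p : ℕ)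
    (hpw : HasPathwidthLE G p) :
    AlmostEquitablyColorable G (p ^ 2) (p + 1) := by
  obtain ⟨a, b, hab, hadj, hply⟩ := hpw.exists_intervals
  obtain ⟨X, c, hc, hX, hbal⟩ := exists_isIntervalColoring_balanced hab hply
  exact almostEquitablyColorable_of_isIntervalColoring hadj hc
    (hX.trans (Nat.le_self_pow two_ne_zero p)) hbal
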